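/- arXiv:1404.3544 — 6 statements merged into one kernel-verified Lean document; each statement's English description precedes it below -/
import Mathlib

section
/- Let H be an N×N complex Hadamard matrix (N ≥ 1). For indices i,j define the matrix P_{ij} ∈ M_N(ℂ) with entries (P_{ij})_{kl} = (1/N)·H_{ik}H_{jl}·conj(H_{il}H_{jk}). Then the matrix P = (P_{ij}) is magic: each P_{ij} is a self-adjoint idempotent (P_{ij}* = P_{ij} and P_{ij}² = P_{ij}), and for every fixed i one has Σ_j P_{ij} = Id_N, and for every fixed j one has Σ_i P_{ij} = Id_N. -/
open Matrix BigOperators ComplexConjugate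

/-- `H` is a complex Hadamard matrix: all entries have modulus one, and the rows are
pairwise orthogonal, `∑ k, H i k * conj (H j k) = N·δ_{ij}` where `N` is the size. -/
def IsHadamard {I : Type*} [Fintype I] [DecidableEq I] (H : Matrix I I ℂ) : Prop :=
  (∀ i j, ‖H i j‖ = 1) ∧
  (∀ i j, ∑ k, H i k * conj (H j k) = if i = j then (Fintype.card I : ℂ) else 0)

/-- The rank-one projection `P_{ij} = Proj(H_i/H_j)`, with entries
`(P_{ij})_{kl} = (1/N)·H_{ik}·H_{jl}·conj(H_{il}·H_{jk})`. -/
noncomputable def hadamardProj {I : Type*} [Fintype I] (H : Matrix I I ℂ) (i j : I) :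
    Matrix I I ℂ :=
  fun k l => (Fintype.card I : ℂ)⁻¹ * H i k * H j l * conj (H i l * H j k)

/-! Writing `v = H_i / H_j`, a vector with unimodular entries, `P_{ij} = N⁻¹ • v vᴴ` with
`vᴴ v = N`, so it is a rank-one star projection. Since `H` is square, `H Hᴴ = N • 1` forces
`Hᴴ H = N • 1`, i.e. the columns of `H` are orthogonal too; this makes every row of `P` sum to
the identity, and `P_{ji} = P_{ij}ᵀ` turns column sums into row sums. -/

theorem Matrix.isStarProjection_inv_smul_vecMulVec_star {n K : Type*} [Fintype n] [Field K]
    [StarRing K] (v : n → K) :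
    IsStarProjection ((star v ⬝ᵥ v)⁻¹ • vecMulVec v (star v)) := by
  have hreal : star (star v ⬝ᵥ v) = star v ⬝ᵥ v := by rw [← star_dotProduct]
  refine ⟨?_, ?_⟩
  · rw [IsIdempotentElem, smul_mul_smul_comm, vecMulVec_mul_vecMulVec, vecMulVec_smul,
      smul_smul]
    congr 1
    simpa only [inv_inv] using mul_self_mul_inv (star v ⬝ᵥ v)⁻¹
  · rw [IsSelfAdjoint, star_smul, star_inv₀, hreal, star_eq_conjTranspose,
      conjTranspose_vecMulVec, star_star]

section

variable {I : Type*} [Fintype I]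

/-- The entrywise quotient `H_i / H_j`, written with `conj` as the entries of `H` are unimodular. -/
def hadamardRowQuot (H : Matrix I I ℂ) (i j : I) : I → ℂ :=
  fun k => H i k * conj (H j k)

theorem hadamardProj_eq_smul_vecMulVec (H : Matrix I I ℂ) (i j : I) :
    hadamardProj H i j = (Fintype.card I : ℂ)⁻¹ •
      vecMulVec (hadamardRowQuot H i j) (star (hadamardRowQuot H i j)) := by
  ext k l
  simp only [hadamardProj, hadamardRowQuot, Matrix.smul_apply, vecMulVec_apply, Pi.star_apply,
    RCLike.star_def, map_mul, Complex.conj_conj, smul_eq_mul]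
  ring

theorem hadamardProj_transpose (H : Matrix I I ℂ) (i j : I) :
    (hadamardProj H i j)ᵀ = hadamardProj H j i := by
  ext k l
  simp only [hadamardProj, transpose_apply, map_mul]
  ring

variable [DecidableEq I] {H : Matrix I I ℂ}

namespace IsHadamard

theorem mul_conj_self (hH : _root_.IsHadamard H) (i j : I) : H i j * conj (H i j) = 1 := by
  rw [Complex.mul_conj, Complex.normSq_eq_norm_sq, hH.1, one_pow, Complex.ofReal_one]

theorem mul_conjTranspose_self (hH : _root_.IsHadamard H) : H * Hᴴ = (Fintype.card I : ℂ) • 1 := by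
  ext i j
  simpa [mul_apply, one_apply] using hH.2 i j

theorem conjTranspose_mul_self (hH : _root_.IsHadamard H) : Hᴴ * H = (Fintype.card I : ℂ) • 1 := by
  rcases isEmpty_or_nonempty I with hI | hI
  · exact Subsingleton.elim _ _
  have hN : (Fintype.card I : ℂ) ≠ 0 := Nat.cast_ne_zero.2 Fintype.card_ne_zero
  have hinv : ((Fintype.card I : ℂ)⁻¹ • Hᴴ) * H = 1 := by
    refine mul_eq_one_comm.mp ?_
    rw [Matrix.mul_smul, hH.mul_conjTranspose_self, smul_smul, inv_mul_cancel₀ hN, one_smul]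
  apply smul_right_injective _ (inv_ne_zero hN)
  dsimp only
  rw [← Matrix.smul_mul, hinv, smul_smul, inv_mul_cancel₀ hN, one_smul]

theorem star_hadamardRowQuot_dotProduct (hH : _root_.IsHadamard H) (i j : I) :
    star (hadamardRowQuot H i j) ⬝ᵥ hadamardRowQuot H i j = Fintype.card I := by
  have hterm : ∀ k, conj (H i k * conj (H j k)) * (H i k * conj (H j k)) = 1 := fun k => by
    rw [map_mul, Complex.conj_conj]
    linear_combination (H j k * conj (H j k)) * hH.mul_conj_self i k + hH.mul_conj_self j k
  simp only [dotProduct, Pi.star_apply, RCLike.star_def, hadamardRowQuot, hterm]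
  simp

theorem isStarProjection_hadamardProj (hH : _root_.IsHadamard H) (i j : I) :
    IsStarProjection (hadamardProj H i j) := by
  rw [hadamardProj_eq_smul_vecMulVec, ← hH.star_hadamardRowQuot_dotProduct i j]
  exact isStarProjection_inv_smul_vecMulVec_star _

theorem sum_hadamardProj_right (hH : _root_.IsHadamard H) (i : I) : ∑ j, hadamardProj H i j = 1 := by
  ext k l
  have hsum : (∑ j, hadamardProj H i j) k l =
      (Fintype.card I : ℂ)⁻¹ * (H i k * conj (H i l)) * (Hᴴ * H) k l := by
    simp only [Matrix.sum_apply, mul_apply, Finset.mul_sum, conjTranspose_apply, RCLike.star_def]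
    refine Finset.sum_congr rfl fun j _ => ?_
    simp only [hadamardProj, map_mul]
    ring
  rw [hsum, hH.conjTranspose_mul_self, Matrix.smul_apply, one_apply]
  split_ifs with hkl
  · subst hkl
    have : Nonempty I := ⟨k⟩
    have hN : (Fintype.card I : ℂ) ≠ 0 := Nat.cast_ne_zero.2 Fintype.card_ne_zero
    rw [hH.mul_conj_self, smul_eq_mul, mul_one, mul_one, inv_mul_cancel₀ hN]
  · simp

theorem sum_hadamardProj_left (hH : _root_.IsHadamard H) (j : I) : ∑ i, hadamardProj H i j = 1 := by
  simp_rw [← hadamardProj_transpose H j, ← transpose_sum, hH.sum_hadamardProj_right j,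
    transpose_one]

end IsHadamard

end

theorem hadamardProj_magic_general (N : ℕ) (H : Matrix (Fin N) (Fin N) ℂ)
    (hH : _root_.IsHadamard H) :
    (∀ i j, (hadamardProj H i j)ᴴ = hadamardProj H i j) ∧
    (∀ i j, hadamardProj H i j * hadamardProj H i j = hadamardProj H i j) ∧
    (∀ i, ∑ j, hadamardProj H i j = 1) ∧
    (∀ j, ∑ i, hadamardProj H i j = 1) :=
  ⟨fun i j => (hH.isStarProjection_hadamardProj i j).isSelfAdjoint,
    fun i j => (hH.isStarProjection_hadamardProj i j).isIdempotentElem,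
    hH.sum_hadamardProj_right, hH.sum_hadamardProj_left⟩

/-- for a complex Hadamard matrix `H`, the matrix `P = (P_{ij})` is magic:
each `P_{ij}` is a self-adjoint idempotent, and each row and each column of `P`
sums to the identity matrix. -/
theorem hadamardProj_magic (N : ℕ) (hN : 1 ≤ N) (H : Matrix (Fin N) (Fin N) ℂ)
    (hH : _root_.IsHadamard H) :
    (∀ i j, (hadamardProj H i j)ᴴ = hadamardProj H i j) ∧
    (∀ i j, hadamardProj H i j * hadamardProj H i j = hadamardProj H i j) ∧
    (∀ i, ∑ j, hadamardProj H i j = 1) ∧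
    (∀ j, ∑ i, hadamardProj H i j = 1) :=
  hadamardProj_magic_general N H hH
end

section
/- Let H be an N×N complex Hadamard matrix, with profile matrix Q_{ab,cd} = (1/N)·Σ_i H_{ia}H_{id}·conj(H_{ib}H_{ic}). For r ≥ 1 define the matrix X = X^{(r)} ∈ M_{N^r}(ℂ) by X_{a₁…a_r, b₁…b_r} = Q_{a₁b₁,a₂b₂}·Q_{a₂b₂,a₃b₃}⋯Q_{a_rb_r,a₁b₁} (indices cyclic). Then for all p ≥ 1, Tr(T_p^r) = (1/N^r)·Tr(X^p), where T_p ∈ M_{N^p}(ℂ) has entries (T_p)_{i₁…i_p, j₁…j_p} = tr(P_{i₁j₁}⋯P_{i_pj_p}). -/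
open Matrix BigOperators ComplexConjugate

/-- The matrix `T_p`, with entries `(T_p)_{i₁…i_p,j₁…j_p} = tr(P_{i₁j₁}⋯P_{i_pj_p})`. -/
noncomputable def Tmat {I : Type*} [Fintype I] [DecidableEq I] (H : Matrix I I ℂ) (p : ℕ) :
    Matrix (Fin p → I) (Fin p → I) ℂ :=
  fun i j => (Fintype.card I : ℂ)⁻¹ *
    Matrix.trace ((List.ofFn fun s => hadamardProj H (i s) (j s)).prod)

/-- The profile matrix of `H`: `Q_{ab,cd} = (1/N)·∑_i H_{ia}·H_{id}·conj(H_{ib}·H_{ic})`. -/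
noncomputable def profile {I : Type*} [Fintype I] (H : Matrix I I ℂ) (a b c d : I) : ℂ :=
  (Fintype.card I : ℂ)⁻¹ * ∑ i, H i a * H i d * conj (H i b * H i c)

/-- The truncation matrix of order `r`: `X^{(r)} ∈ M_{N^r}(ℂ)`,
`X_{a₁…a_r,b₁…b_r} = Q_{a₁b₁,a₂b₂}⋯Q_{a_rb_r,a₁b₁}` (cyclic indices, via `finRotate`). -/
noncomputable def trunc {I : Type*} [Fintype I] (H : Matrix I I ℂ) (r : ℕ) :
    Matrix (Fin r → I) (Fin r → I) ℂ :=
  fun a b => ∏ s : Fin r,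
    profile H (a s) (b s) (a (finRotate r s)) (b (finRotate r s))

/-!
Expanding each trace as a sum over cyclic index sequences writes `Tr(T_p^r)` as a sum over an
`r × p` torus of row indices `f` and column indices `k` of products of entries of the projections
`P_{ij}`. Each entry of `P_{ij}` splits into a factor depending only on row `i` and one depending
only on row `j`; shifting the latter by one step around the torus leaves every row index `f t s` in
a single cell, so summing out `f` yields one profile entry per cell. `Tr(X^p)` is the same sum of
profile entries, read on the transposed and reflected torus.
-/

namespace Matrix

variable {ι R : Type*} [Fintype ι] [DecidableEq ι] [CommSemiring R]

theorem trace_mul_list_ofFn_prod : ∀ {n : ℕ} (M : Matrix ι ι R) (A : Fin n → Matrix ι ι R),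
    trace (M * (List.ofFn A).prod) =
      ∑ k : Fin (n + 1) → ι, M (k (Fin.last n)) (k 0) * ∏ s : Fin n, A s (k s.castSucc) (k s.succ)
  | 0, M, A => by
    simp only [List.ofFn_zero, List.prod_nil, mul_one, Finset.univ_eq_empty, Finset.prod_empty,
      Fin.last_zero]
    exact Fintype.sum_equiv (Equiv.funUnique (Fin 1) ι).symm _ _ fun _ ↦ rfl
  | n + 1, M, A => by
    rw [List.ofFn_succ, List.prod_cons, ← mul_assoc, trace_mul_list_ofFn_prod]
    conv_rhs => rw [← (Fin.consEquiv fun _ ↦ ι).sum_comp, Fintype.sum_prod_type, Finset.sum_comm]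
    simp only [mul_apply, Finset.sum_mul, Fin.consEquiv_apply, Fin.prod_univ_succ, Fin.cons_zero,
      Fin.castSucc_zero, Fin.cons_succ, ← Fin.succ_last, ← Fin.succ_castSucc, mul_assoc]

theorem trace_list_ofFn_prod {n : ℕ} [NeZero n] (A : Fin n → Matrix ι ι R) :
    trace (List.ofFn A).prod = ∑ k : Fin n → ι, ∏ s, A s (k s) (k (s + 1)) := by
  obtain ⟨m, rfl⟩ := Nat.exists_eq_succ_of_ne_zero (NeZero.ne n)
  rw [List.ofFn_succ', List.prod_concat, trace_mul_comm, trace_mul_list_ofFn_prod]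
  refine Finset.sum_congr rfl fun k _ ↦ ?_
  rw [Fin.prod_univ_castSucc, mul_comm]
  simp [Fin.coeSucc_eq_succ]

theorem trace_pow_eq_sum_prod {n : ℕ} [NeZero n] (M : Matrix ι ι R) :
    trace (M ^ n) = ∑ k : Fin n → ι, ∏ s, M (k s) (k (s + 1)) := by
  simpa using trace_list_ofFn_prod fun _ : Fin n ↦ M

end Matrix

section Profile

variable {I : Type*} [Fintype I] (H : Matrix I I ℂ)

def rowOuter (i a b : I) : ℂ := H i a * conj (H i b)

theorem hadamardProj_apply (i j k l : I) :
    hadamardProj H i j k l = (Fintype.card I : ℂ)⁻¹ * (rowOuter H i k l * rowOuter H j l k) := by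
  simp only [hadamardProj, rowOuter, map_mul]
  ring

theorem profile_eq_sum_rowOuter (a b c d : I) :
    profile H a b c d = (Fintype.card I : ℂ)⁻¹ * ∑ i, rowOuter H i a b * rowOuter H i d c := by
  simp only [profile, rowOuter, map_mul]
  congr 1
  exact Finset.sum_congr rfl fun _ _ ↦ by ring

theorem Tmat_apply [DecidableEq I] {p : ℕ} [NeZero p] (i j : Fin p → I) :
    Tmat H p i j = (Fintype.card I : ℂ)⁻¹ *
      ∑ k : Fin p → I, ∏ s, hadamardProj H (i s) (j s) (k s) (k (s + 1)) := by
  rw [Tmat, trace_list_ofFn_prod]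

theorem trunc_apply {r : ℕ} [NeZero r] (a b : Fin r → I) :
    trunc H r a b = ∏ s, profile H (a s) (b s) (a (s + 1)) (b (s + 1)) := by
  simp only [trunc, finRotate_apply]

variable {p r : ℕ} [NeZero p] [NeZero r]

theorem sum_prod_hadamardProj (k : Fin r → Fin p → I) :
    ∑ f : Fin r → Fin p → I, ∏ t, ∏ s, hadamardProj H (f t s) (f (t + 1) s) (k t s) (k t (s + 1)) =
      ∏ t, ∏ s, profile H (k t s) (k t (s + 1)) (k (t - 1) s) (k (t - 1) (s + 1)) := by
  have shift (f : Fin r → Fin p → I) :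
      ∏ t, ∏ s, hadamardProj H (f t s) (f (t + 1) s) (k t s) (k t (s + 1)) =
        ∏ t, ∏ s, (Fintype.card I : ℂ)⁻¹ * (rowOuter H (f t s) (k t s) (k t (s + 1)) *
          rowOuter H (f t s) (k (t - 1) (s + 1)) (k (t - 1) s)) := by
    simp only [hadamardProj_apply, Finset.prod_mul_distrib]
    congr 2
    simpa using ((Equiv.subRight (1 : Fin r)).prod_comp
      fun t ↦ ∏ s, rowOuter H (f (t + 1) s) (k t (s + 1)) (k t s)).symm
  simp only [shift, profile_eq_sum_rowOuter, Finset.mul_sum, Fintype.prod_sum]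

theorem trace_Tmat_pow_eq_sum_prod_profile [DecidableEq I] :
    trace (Tmat H p ^ r) = (Fintype.card I : ℂ)⁻¹ ^ r * ∑ k : Fin r → Fin p → I,
      ∏ t, ∏ s, profile H (k t s) (k t (s + 1)) (k (t - 1) s) (k (t - 1) (s + 1)) := by
  simp only [trace_pow_eq_sum_prod, Tmat_apply, Finset.prod_mul_distrib, Finset.prod_const,
    Finset.card_univ, Fintype.card_fin, Fintype.prod_sum, ← Finset.mul_sum]
  rw [Finset.sum_comm]
  simp only [sum_prod_hadamardProj]

theorem trace_trunc_pow_eq_sum_prod_profile [DecidableEq I] :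
    trace (trunc H r ^ p) = ∑ k : Fin r → Fin p → I,
      ∏ t, ∏ s, profile H (k t s) (k t (s + 1)) (k (t - 1) s) (k (t - 1) (s + 1)) := by
  rw [trace_pow_eq_sum_prod]
  refine Fintype.sum_equiv ((Equiv.piComm _).trans ((Equiv.neg _).arrowCongr (.refl _))) _ _
    fun g ↦ ?_
  rw [Finset.prod_comm]
  refine Finset.prod_congr rfl fun s _ ↦ ?_
  rw [trunc_apply]
  exact Fintype.prod_equiv (Equiv.neg _) _ _ fun t ↦ by simp [sub_neg_eq_add, add_comm]

end Profile

theorem trace_Tmat_pow_general (N : ℕ) (p r : ℕ) (hp : 1 ≤ p) (hr : 1 ≤ r)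
    (H : Matrix (Fin N) (Fin N) ℂ) :
    Matrix.trace (Tmat H p ^ r) = ((N : ℂ) ^ r)⁻¹ * Matrix.trace (trunc H r ^ p) := by
  have : NeZero p := ⟨by omega⟩
  have : NeZero r := ⟨by omega⟩
  rw [trace_Tmat_pow_eq_sum_prod_profile, trace_trunc_pow_eq_sum_prod_profile, Fintype.card_fin,
    inv_pow]

/-- `Tr(T_p^r) = (1/N^r)·Tr((X^{(r)})^p)` for all `p, r ≥ 1`. -/
theorem trace_Tmat_pow (N : ℕ) (hN : 1 ≤ N) (p r : ℕ) (hp : 1 ≤ p) (hr : 1 ≤ r)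
    (H : Matrix (Fin N) (Fin N) ℂ) (hH : _root_.IsHadamard H) :
    Matrix.trace (Tmat H p ^ r) = ((N : ℂ) ^ r)⁻¹ * Matrix.trace (trunc H r ^ p) :=
  trace_Tmat_pow_general N p r hp hr H
end

section
/- Let H be an N×N complex Hadamard matrix and r ≥ 1. Then the truncation matrix X^{(r)} ∈ M_{N^r}(ℂ) is self-adjoint and its eigenvalues all lie in the interval [0, N]; equivalently, X^{(r)} is positive semidefinite and N·Id − X^{(r)} is positive semidefinite. -/
open Matrix BigOperators ComplexConjugate
open scoped ComplexOrder

/-!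
Put `W_{a,k} = ∏_s H_{k_s a_s} · conj (H_{k_s a_{s+1}})`. Expanding the cyclic product of
profile entries gives `X^{(r)} = N^{-r} · W Wᴴ`, so `X^{(r)}` is positive semidefinite.

For the upper bound, group the multi-indices `a` by a fixed coordinate `a_{s₀}`. Within a group
the rows of `W` are orthogonal of squared norm `N^r`: if `a ≠ b` but `a_{s₀} = b_{s₀}`, walking
around the cycle gives an `s` with `a_s = b_s` and `a_{s+1} ≠ b_{s+1}`, and the `s`-th factor of
`(W Wᴴ)_{ab}` is then an inner product of two distinct columns of `H`. So `W Wᴴ` has diagonal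
blocks `N^r · 1`, and a positive semidefinite matrix with `k` diagonal blocks is dominated by
`k` times its block-diagonal part, since the difference is `½ ∑_{p,q} (E_p - E_q) M (E_p - E_q)`
for the coordinate projections `E_p` onto the blocks.
-/

namespace Matrix

variable {ι π 𝕜 : Type*} [DecidableEq ι] [DecidableEq π] [RCLike 𝕜]

def fiberProj (g : ι → π) (p : π) : Matrix ι ι 𝕜 :=
  diagonal fun a => if g a = p then 1 else 0

lemma isHermitian_fiberProj (g : ι → π) (p : π) : (fiberProj g p : Matrix ι ι 𝕜).IsHermitian :=
  isHermitian_diagonal_of_self_adjoint _ (by ext; simp [apply_ite star])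

variable [Fintype π]

lemma sum_fiberProj (g : ι → π) : ∑ p, (fiberProj g p : Matrix ι ι 𝕜) = 1 := by
  ext a b
  simp [fiberProj, sum_apply, diagonal_apply, one_apply]

variable [Fintype ι]

lemma PosSemidef.card_smul_sum_fiberProj_sub {M : Matrix ι ι 𝕜} (hM : M.PosSemidef) (g : ι → π) :
    ((Fintype.card π : 𝕜) • ∑ p, fiberProj g p * M * fiberProj g p - M).PosSemidef := by
  set E : π → Matrix ι ι 𝕜 := fiberProj g
  have hcross : ∑ p, ∑ q, E p * M * E q = M := by
    simp [E, ← Finset.mul_sum, ← Finset.sum_mul, sum_fiberProj]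
  have key : (Fintype.card π : 𝕜) • ∑ p, E p * M * E p - M
      = (2⁻¹ : ℝ) • ∑ p, ∑ q, (E p - E q)ᴴ * M * (E p - E q) := by
    have hE : ∀ p, (E p)ᴴ = E p := fun p => (isHermitian_fiberProj g p).eq
    simp only [conjTranspose_sub, hE, sub_mul, mul_sub, Finset.sum_sub_distrib,
      Finset.sum_const, Finset.card_univ, ← Finset.smul_sum]
    rw [Finset.sum_comm (f := fun p q => E q * M * E p), hcross]
    module
  rw [key]
  exact (posSemidef_sum _ fun p _ => posSemidef_sum _ fun q _ =>
    hM.conjTranspose_mul_mul_same _).smul (by norm_num)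

lemma sum_fiberProj_mul_mul_fiberProj_of_fiber {M : Matrix ι ι 𝕜} (g : ι → π) (c : 𝕜)
    (hfiber : ∀ a b, g a = g b → M a b = if a = b then c else 0) :
    ∑ p, fiberProj g p * M * fiberProj g p = c • 1 := by
  ext a b
  by_cases hab : g a = g b
  · simp [fiberProj, sum_apply, hab, hfiber a b hab, one_apply]
  · simp [fiberProj, sum_apply, hab, ne_of_apply_ne g hab]

lemma PosSemidef.card_mul_smul_one_sub_of_fiber {M : Matrix ι ι 𝕜} (hM : M.PosSemidef)
    (g : ι → π) (c : 𝕜) (hfiber : ∀ a b, g a = g b → M a b = if a = b then c else 0) :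
    (((Fintype.card π : 𝕜) * c) • 1 - M).PosSemidef := by
  rw [mul_smul, ← sum_fiberProj_mul_mul_fiberProj_of_fiber g c hfiber]
  exact hM.card_smul_sum_fiberProj_sub g

end Matrix

lemma Fin.forall_of_finRotate {n : ℕ} {P : Fin n → Prop} (s₀ : Fin n) (h₀ : P s₀)
    (hstep : ∀ s, P s → P (finRotate n s)) (s : Fin n) : P s := by
  cases n with
  | zero => exact s.elim0
  | succ n =>
    have hshift : ∀ i : Fin (n + 1), P (s₀ + i) := by
      intro i
      induction i using Fin.induction with
      | zero => simpa using h₀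
      | succ i ih => simpa [finRotate_apply, add_assoc, Fin.coeSucc_eq_succ] using hstep _ ih
    simpa using hshift (s - s₀)

lemma Fin.exists_eq_and_finRotate_ne {n : ℕ} {α : Type*} {a b : Fin n → α} (s₀ : Fin n)
    (h₀ : a s₀ = b s₀) (hne : a ≠ b) :
    ∃ s, a s = b s ∧ a (finRotate n s) ≠ b (finRotate n s) := by
  by_contra! h
  exact hne (funext (Fin.forall_of_finRotate s₀ h₀ h))

lemma IsHadamard.matrix_isHadamard {I : Type*} [Fintype I] [DecidableEq I] [Nonempty I]
    {H : Matrix I I ℂ} (hH : _root_.IsHadamard H) : H.IsHadamard := by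
  refine .of_mul_conjTranspose (fun i j => ?_) ?_ (IsRegular.of_ne_zero (by simp))
  · have h : conj (H i j) * H i j = 1 := by simp [Complex.conj_mul', hH.1 i j]
    exact Unitary.mem_iff.mpr ⟨h, by rwa [mul_comm]⟩
  · ext i j
    simpa [mul_apply, one_apply] using hH.2 i j

noncomputable def truncFactor {I : Type*} [Fintype I] (H : Matrix I I ℂ) (r : ℕ) :
    Matrix (Fin r → I) (Fin r → I) ℂ :=
  fun a k => ∏ s, H (k s) (a s) * conj (H (k s) (a (finRotate r s)))

section truncFactor

variable {I : Type*} [Fintype I] (H : Matrix I I ℂ) (r : ℕ)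

lemma truncFactor_mul_conjTranspose_apply (a b : Fin r → I) :
    (truncFactor H r * (truncFactor H r)ᴴ) a b =
      ∏ s, ∑ i, H i (a s) * H i (b (finRotate r s)) *
        conj (H i (b s) * H i (a (finRotate r s))) := by
  simp only [mul_apply, conjTranspose_apply, truncFactor, ← starRingEnd_apply, map_prod,
    ← Finset.prod_mul_distrib, Fintype.prod_sum]
  refine Finset.sum_congr rfl fun k _ => Finset.prod_congr rfl fun s _ => ?_
  simp only [map_mul, Complex.conj_conj]
  ring

lemma trunc_eq_smul_truncFactor_mul_conjTranspose :
    trunc H r = ((Fintype.card I : ℂ)⁻¹ ^ r) • (truncFactor H r * (truncFactor H r)ᴴ) := by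
  ext a b
  rw [Matrix.smul_apply, truncFactor_mul_conjTranspose_apply, smul_eq_mul]
  simp only [trunc, profile, Finset.prod_mul_distrib, Finset.prod_const, Finset.card_univ,
    Fintype.card_fin]

end truncFactor

lemma Matrix.IsHadamard.truncFactor_mul_conjTranspose_apply_of_eq {I : Type*} [Fintype I]
    [DecidableEq I] {H : Matrix I I ℂ} (hH : H.IsHadamard) {r : ℕ} (s₀ : Fin r)
    {a b : Fin r → I} (h₀ : a s₀ = b s₀) :
    (truncFactor H r * (truncFactor H r)ᴴ) a b =
      if a = b then (Fintype.card I : ℂ) ^ r else 0 := by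
  have hunit : ∀ i j, H i j * conj (H i j) = 1 := fun i j =>
    Unitary.mul_star_self_of_mem (hH.apply_mem i j)
  have hcol : ∀ c d, ∑ i, conj (H i c) * H i d = if c = d then (Fintype.card I : ℂ) else 0 :=
    fun c d => by simpa [mul_apply, one_apply] using congr_fun₂ hH.conjTranspose_mul c d
  rw [truncFactor_mul_conjTranspose_apply]
  split_ifs with hab
  · subst hab
    simp [map_mul, mul_mul_mul_comm _ _ (conj _), hunit]
  · obtain ⟨s, hs, hs'⟩ := Fin.exists_eq_and_finRotate_ne s₀ h₀ hab
    refine Finset.prod_eq_zero (Finset.mem_univ s) ?_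
    simp only [hs, map_mul, mul_mul_mul_comm _ _ (conj _), hunit, one_mul]
    rw [← (hcol _ _).trans (if_neg hs')]
    exact Finset.sum_congr rfl fun i _ => mul_comm _ _

/-- the truncation matrix `X^{(r)}` is self-adjoint with all eigenvalues in
`[0, N]`: it is positive semidefinite and `N·Id − X^{(r)}` is positive semidefinite. -/
theorem trunc_posSemidef (N : ℕ) (hN : 1 ≤ N) (r : ℕ) (hr : 1 ≤ r)
    (H : Matrix (Fin N) (Fin N) ℂ) (hH : _root_.IsHadamard H) :
    (trunc H r).IsHermitian ∧ (trunc H r).PosSemidef ∧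
      ((N : ℂ) • (1 : Matrix (Fin r → Fin N) (Fin r → Fin N) ℂ) - trunc H r).PosSemidef := by
  have : NeZero N := ⟨by omega⟩
  set F := truncFactor H r
  have hF : (F * Fᴴ).PosSemidef := posSemidef_self_mul_conjTranspose F
  have hX : trunc H r = ((N : ℂ)⁻¹ ^ r) • (F * Fᴴ) := by
    simpa using trunc_eq_smul_truncFactor_mul_conjTranspose H r
  have hc : (0 : ℂ) ≤ (N : ℂ)⁻¹ ^ r := by positivity
  have hbound : (((N : ℂ) * N ^ r) • 1 - F * Fᴴ).PosSemidef := by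
    simpa using hF.card_mul_smul_one_sub_of_fiber (fun a => a ⟨0, hr⟩) _
      fun a b => hH.matrix_isHadamard.truncFactor_mul_conjTranspose_apply_of_eq ⟨0, hr⟩
  have hpos : (trunc H r).PosSemidef := hX ▸ hF.smul hc
  refine ⟨hpos.isHermitian, hpos, ?_⟩
  have : (N : ℂ) • 1 - trunc H r = (N : ℂ)⁻¹ ^ r • (((N : ℂ) * N ^ r) • 1 - F * Fᴴ) := by
    rw [hX, smul_sub, smul_smul, mul_left_comm, ← mul_pow, inv_mul_cancel₀ (NeZero.ne _), one_pow, mul_one]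
  exact this ▸ hbound.smul hc
end

section
/- Let F_N be the N×N Fourier matrix, (F_N)_{ij} = w^{ij} with w = e^{2πi/N} and indices in ℤ/Nℤ, and let r ≥ 1. Then the truncation matrix X^{(r)} of F_N is given by X^{(r)}_{a₁…a_r, b₁…b_r} = 1 if a₁ − b₁ = a₂ − b₂ = ⋯ = a_r − b_r in ℤ/Nℤ, and 0 otherwise. -/
open Matrix BigOperators ComplexConjugate

/-- The Fourier matrix `F_N = (w^{ij})`, `w = e^{2πi/N}`, indices in `ℤ/Nℤ`. -/
noncomputable def fourierMat (N : ℕ) : Matrix (ZMod N) (ZMod N) ℂ :=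
  fun i j => Complex.exp (2 * Real.pi * Complex.I * (i.val * j.val) / N)

/-! The entries of `F_N` are `ψ(ij)` for the primitive character `ψ = e^{2πi·/N}` of `ℤ/Nℤ`, so by
orthogonality of characters `Q_{ab,cd} = δ_{a-b,c-d}`. Hence `X^{(r)}_{a,b}` is `1` exactly when
`s ↦ a_s - b_s` is invariant under the cyclic shift of `Fin r`, i.e. constant, since the shift
generates all translations of `Fin r`. -/

lemma forall_eq_finRotate_iff {α : Type*} {r : ℕ} (f : Fin r → α) :
    (∀ s, f s = f (finRotate r s)) ↔ ∀ s t, f s = f t := by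
  refine ⟨fun h s t => ?_, fun h s => h _ _⟩
  cases r with
  | zero => exact s.elim0
  | succ m =>
    have hinv : Function.Semiconj f (finRotate (m + 1)) id := fun s => (h s).symm
    have hshift := hinv.iterate_right (t - s).val s
    rwa [← finCycle_eq_finRotate_iterate, finCycle_apply, add_sub_cancel, Function.iterate_id,
      id, eq_comm] at hshift

section PrimitiveCharacter

variable {R : Type*} [CommRing R] [Fintype R] [DecidableEq R] {ψ : AddChar R ℂ}

lemma profile_of_isPrimitive (hψ : ψ.IsPrimitive) (a b c d : R) :
    profile (fun i j => ψ (i * j)) a b c d = if a - b = c - d then 1 else 0 := by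
  have hsummand : ∀ i : R, ψ (i * a) * ψ (i * d) * conj (ψ (i * b) * ψ (i * c)) =
      ψ (i * (a + d - b - c)) := by
    intro i
    rw [← AddChar.map_add_eq_mul, ← AddChar.map_add_eq_mul, ← AddChar.map_neg_eq_conj,
      ← AddChar.map_add_eq_mul]
    ring_nf
  have hcard : (Fintype.card R : ℂ) ≠ 0 := Nat.cast_ne_zero.mpr Fintype.card_ne_zero
  have hiff : a + d - b - c = 0 ↔ a - b = c - d := by
    rw [show a + d - b - c = (a - b) - (c - d) by ring, sub_eq_zero]
  simp only [profile, hsummand, AddChar.sum_mulShift _ hψ, hiff, Nat.cast_ite, Nat.cast_zero,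
    mul_ite, mul_zero, inv_mul_cancel₀ hcard]

end PrimitiveCharacter

lemma fourierMat_eq_stdAddChar (N : ℕ) [NeZero N] :
    fourierMat N = fun i j => ZMod.stdAddChar (i * j) := by
  ext i j
  have hcast : ((i.val * j.val : ℤ) : ZMod N) = i * j := by push_cast [ZMod.natCast_val]; simp
  rw [← hcast, ZMod.stdAddChar_coe, fourierMat]
  push_cast
  ring_nf

theorem trunc_fourier_general (N : ℕ) [NeZero N] (r : ℕ)
    (a b : Fin r → ZMod N) :
    trunc (fourierMat N) r a b =
      if ∀ s t : Fin r, a s - b s = a t - b t then 1 else 0 := by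
  simp only [trunc, fourierMat_eq_stdAddChar,
    profile_of_isPrimitive (ZMod.isPrimitive_stdAddChar N), Fintype.prod_boole]
  congr 1
  exact propext (forall_eq_finRotate_iff fun s => a s - b s)

/-- the truncation matrix of the Fourier matrix `F_N` is given by
`X^{(r)}_{a₁…a_r,b₁…b_r} = δ_{a₁−b₁,…,a_r−b_r}`, equal to `1` when all the differences
`a_s − b_s` coincide in `ℤ/Nℤ` and to `0` otherwise. -/
theorem trunc_fourier (N : ℕ) [NeZero N] (r : ℕ) (hr : 1 ≤ r)
    (a b : Fin r → ZMod N) :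
    trunc (fourierMat N) r a b =
      if ∀ s t : Fin r, a s - b s = a t - b t then 1 else 0 :=
  trunc_fourier_general N r a b
end

section
/- Let F_N be the N×N Fourier matrix, (F_N)_{ij} = w^{ij} with w = e^{2πi/N} and indices in ℤ/Nℤ, and let r ≥ 1. Then the truncation matrix X = X^{(r)} of F_N satisfies X² = N·X; consequently X/N is an orthogonal projection (self-adjoint idempotent) in M_{N^r}(ℂ). -/
/-!
For a primitive additive character `ψ`, orthogonality of characters makes the profile of the
matrix `(ψ (i * j))` the indicator of `a - b = c - d`. An entry `X_{a,b}` of the truncation is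
then `1` exactly when `a - b` is invariant under cyclic rotation, i.e. constant, so `X` is the
matrix of the relation `a - b ∈ D` for the diagonal subgroup `D ≅ ℤ/N` of `(ℤ/N)^r`. Such a
matrix is symmetric, and its square counts, for `a - c ∈ D`, the `|D| = N` points `b` with
`a - b ∈ D`.
-/

open Matrix BigOperators ComplexConjugate

namespace AddSubgroup

variable {G : Type*} [AddGroup G] (D : AddSubgroup G) (R : Type*)

open Classical in
noncomputable def cosetIndicator [Zero R] [One R] : Matrix G G R :=
  Matrix.of fun a b => if a - b ∈ D then 1 else 0

variable {D R}

lemma sum_cosetIndicator_apply [Fintype G] [NonAssocSemiring R] (a : G) :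
    ∑ b, D.cosetIndicator R a b = Nat.card D := by
  classical
  calc ∑ b, D.cosetIndicator R a b = ∑ x, if x ∈ D then (1 : R) else 0 :=
        (Equiv.subLeft a).sum_comp fun x => if x ∈ D then (1 : R) else 0
    _ = Nat.card D := by
        rw [Finset.sum_boole, Nat.card_eq_fintype_card, Fintype.card_subtype]

lemma cosetIndicator_mul_self [Fintype G] [NonAssocSemiring R] :
    D.cosetIndicator R * D.cosetIndicator R = (Nat.card D : R) • D.cosetIndicator R := by
  classical
  ext a c
  rw [mul_apply, Matrix.smul_apply, smul_eq_mul]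
  by_cases hac : a - c ∈ D
  · have hmul : ∀ b, D.cosetIndicator R a b * D.cosetIndicator R b c =
        D.cosetIndicator R a b := fun b => by
      have hbc : a - b ∈ D → b - c ∈ D := fun hab => by
        simpa [neg_sub, sub_add_sub_cancel] using D.add_mem (D.neg_mem hab) hac
      simp only [cosetIndicator, of_apply, mul_ite, mul_one, mul_zero]
      split_ifs <;> simp_all
    simp only [hmul, sum_cosetIndicator_apply]
    simp [cosetIndicator, hac]
  · have hzero : ∀ b, D.cosetIndicator R a b * D.cosetIndicator R b c = 0 := fun b => by
      have hab : a - b ∈ D → b - c ∉ D := fun hab hbc => hac (by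
        simpa [sub_add_sub_cancel] using D.add_mem hab hbc)
      simp only [cosetIndicator, of_apply, mul_ite, mul_one, mul_zero]
      split_ifs <;> simp_all
    rw [Finset.sum_eq_zero fun b _ => hzero b]
    simp [cosetIndicator, hac]

lemma cosetIndicator_isHermitian [NonAssocSemiring R] [StarRing R] :
    (D.cosetIndicator R).IsHermitian := by
  ext a b
  have hsymm : b - a ∈ D ↔ a - b ∈ D := by rw [← neg_sub, D.neg_mem_iff]
  simp only [conjTranspose_apply, cosetIndicator, of_apply]
  split_ifs <;> simp_all

end AddSubgroup

lemma profile_addChar_mul {R : Type*} [CommRing R] [Fintype R] [DecidableEq R]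
    {ψ : AddChar R ℂ} (hψ : ψ.IsPrimitive) (a b c d : R) :
    profile (Matrix.of fun i j => ψ (i * j)) a b c d = if a - b = c - d then 1 else 0 := by
  have hsummand : ∀ i, ψ (i * a) * ψ (i * d) * conj (ψ (i * b) * ψ (i * c)) =
      ψ (i * (a + d - b - c)) := fun i => by
    rw [map_mul (starRingEnd ℂ), ← AddChar.map_neg_eq_conj, ← AddChar.map_neg_eq_conj,
      ← AddChar.map_add_eq_mul, ← AddChar.map_add_eq_mul, ← AddChar.map_add_eq_mul]
    ring_nf
  have hcard : (Fintype.card R : ℂ) ≠ 0 := by exact_mod_cast Fintype.card_ne_zero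
  simp only [profile, of_apply, hsummand, AddChar.sum_mulShift _ hψ, sub_sub, sub_eq_zero,
    add_comm b c, ← sub_eq_sub_iff_add_eq_add]
  split_ifs <;> simp [hcard]

lemma fourierMat_eq_stdAddChar_mul (N : ℕ) [NeZero N] :
    fourierMat N = Matrix.of fun i j => ZMod.stdAddChar (i * j) := by
  ext i j
  have hij : ((i.val * j.val : ℕ) : ZMod N) = i * j := by simp
  rw [of_apply, ZMod.stdAddChar_apply, ← hij, ZMod.toCircle_natCast, fourierMat]
  push_cast
  rfl

lemma profile_fourierMat (N : ℕ) [NeZero N] (a b c d : ZMod N) :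
    profile (fourierMat N) a b c d = if a - b = c - d then 1 else 0 := by
  rw [fourierMat_eq_stdAddChar_mul]
  exact profile_addChar_mul (ZMod.isPrimitive_stdAddChar N) a b c d

lemma forall_eq_apply_finRotate_iff_exists_const {α : Type*} [Nonempty α] {n : ℕ}
    (d : Fin n → α) : (∀ s, d s = d (finRotate n s)) ↔ ∃ x, Function.const (Fin n) x = d := by
  refine ⟨fun h => ?_, fun ⟨x, hx⟩ s => by simp [← hx]⟩
  rcases isEmpty_or_nonempty (Fin n) with hn | hn
  · exact ⟨Classical.arbitrary α, funext isEmptyElim⟩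
  have : NeZero n := NeZero.of_pos (Fin.pos_iff_nonempty.mpr hn)
  refine ⟨d 0, funext fun s => ?_⟩
  have hiter := congrFun (Function.iterate_invariant (funext fun s => (h s).symm) s.val) 0
  rw [Function.comp_apply, ← finCycle_eq_finRotate_iterate, finCycle_apply, zero_add] at hiter
  exact hiter.symm

lemma trunc_eq_cosetIndicator {I : Type*} [AddGroup I] [Fintype I] [DecidableEq I]
    {H : Matrix I I ℂ} (hH : ∀ a b c d, profile H a b c d = if a - b = c - d then 1 else 0)
    (r : ℕ) : trunc H r = (Pi.constAddMonoidHom (Fin r) I).range.cosetIndicator ℂ := by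
  ext a b
  have hconst := forall_eq_apply_finRotate_iff_exists_const (a - b)
  simp only [Pi.sub_apply] at hconst
  simp only [trunc, hH, Fintype.prod_boole, AddSubgroup.cosetIndicator, of_apply,
    AddMonoidHom.mem_range, hconst]
  rfl

lemma card_range_constAddMonoidHom (ι I : Type*) [Nonempty ι] [AddGroup I] :
    Nat.card (Pi.constAddMonoidHom ι I).range = Nat.card I :=
  (Nat.card_congr (AddMonoidHom.ofInjective
    (f := Pi.constAddMonoidHom ι I) Function.const_injective).toEquiv).symm

/-- for the Fourier matrix `F_N`, the truncation matrix `X = X^{(r)}`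
satisfies `X² = N·X`; consequently `X/N` is an orthogonal projection
(a self-adjoint idempotent) in `M_{N^r}(ℂ)`. -/
theorem trunc_fourier_proj (N : ℕ) [NeZero N] (r : ℕ) (hr : 1 ≤ r) :
    trunc (fourierMat N) r * trunc (fourierMat N) r = (N : ℂ) • trunc (fourierMat N) r ∧
    ((N : ℂ)⁻¹ • trunc (fourierMat N) r)ᴴ = (N : ℂ)⁻¹ • trunc (fourierMat N) r ∧
    ((N : ℂ)⁻¹ • trunc (fourierMat N) r) * ((N : ℂ)⁻¹ • trunc (fourierMat N) r) =
      (N : ℂ)⁻¹ • trunc (fourierMat N) r := by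
  have : Nonempty (Fin r) := Fin.pos_iff_nonempty.mp hr
  set X := trunc (fourierMat N) r
  have hX : X = (Pi.constAddMonoidHom (Fin r) (ZMod N)).range.cosetIndicator ℂ :=
    trunc_eq_cosetIndicator (profile_fourierMat N) r
  have hsq : X * X = (N : ℂ) • X := by
    rw [hX, AddSubgroup.cosetIndicator_mul_self, card_range_constAddMonoidHom, Nat.card_zmod]
  have hN : (N : ℂ) ≠ 0 := NeZero.ne _
  refine ⟨hsq, ?_, ?_⟩
  · rw [conjTranspose_smul, hX, AddSubgroup.cosetIndicator_isHermitian.eq, star_inv₀,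
      star_natCast]
  · rw [smul_mul_smul_comm, hsq, smul_smul]
    congr 1
    field_simp
end

section
/- Let H ∈ M_M(ℂ) and K ∈ M_N(ℂ) be complex Hadamard matrices and let L = H ⊗ K. Then for all r ≥ 1 and p ≥ 1, the normalized trace moments of the truncation matrices are multiplicative: (1/(MN)^r)·Tr((X^L)^p) = (1/M^r)·Tr((X^H)^p) · (1/N^r)·Tr((X^K)^p), where X^H, X^K, X^L are the order-r truncation matrices of H, K, L respectively. -/
open Matrix BigOperators ComplexConjugate

/-- The tensor (Kronecker) product `L = H ⊗ K`, `L_{(m,e),(i,a)} = H_{mi}·K_{ea}`. -/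
def tensorMat {I J : Type*} (H : Matrix I I ℂ) (K : Matrix J J ℂ) :
    Matrix (I × J) (I × J) ℂ :=
  fun p q => H p.1 q.1 * K p.2 q.2

/-!
The profile matrix of `H ⊗ K` is the entrywise product of the profile matrices of `H` and `K`,
since the sum over the rows `(i, j)` of `H ⊗ K` factors. Hence, after regrouping the index
`Fin r → I × J` as a pair `(Fin r → I) × (Fin r → J)`, the truncation matrix of `H ⊗ K` is the
Kronecker product of those of `H` and `K`, and powers and traces are multiplicative on Kronecker
products.
-/

open Kronecker

namespace Matrix

variable {m n R : Type*}

theorem kronecker_pow [CommSemiring R] [Fintype m] [Fintype n] [DecidableEq m] [DecidableEq n]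
    (A : Matrix m m R) (B : Matrix n n R) (p : ℕ) : (A ⊗ₖ B) ^ p = (A ^ p) ⊗ₖ (B ^ p) := by
  induction p with
  | zero => simp only [pow_zero, one_kronecker_one]
  | succ k ih => rw [pow_succ, pow_succ, pow_succ, ih, mul_kronecker_mul]

theorem submatrix_equiv_pow [Semiring R] [Fintype m] [Fintype n] [DecidableEq m] [DecidableEq n]
    (A : Matrix n n R) (e : m ≃ n) (p : ℕ) : A.submatrix e e ^ p = (A ^ p).submatrix e e := by
  induction p with
  | zero => simp only [pow_zero, submatrix_one_equiv]
  | succ k ih => rw [pow_succ, pow_succ, ih, submatrix_mul_equiv]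

theorem trace_submatrix_equiv [AddCommMonoid R] [Fintype m] [Fintype n]
    (A : Matrix n n R) (e : m ≃ n) : trace (A.submatrix e e) = trace A :=
  Fintype.sum_equiv e _ _ fun _ => rfl

end Matrix

section Tensor

variable {I J : Type*} [Fintype I] [Fintype J] (H : Matrix I I ℂ) (K : Matrix J J ℂ)

theorem profile_tensorMat (a b c d : I × J) :
    profile (tensorMat H K) a b c d = profile H a.1 b.1 c.1 d.1 * profile K a.2 b.2 c.2 d.2 := by
  have sum_factor : ∑ x : I × J, (H x.1 a.1 * K x.2 a.2) * (H x.1 d.1 * K x.2 d.2) *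
        conj ((H x.1 b.1 * K x.2 b.2) * (H x.1 c.1 * K x.2 c.2)) =
      (∑ i, H i a.1 * H i d.1 * conj (H i b.1 * H i c.1)) *
        ∑ j, K j a.2 * K j d.2 * conj (K j b.2 * K j c.2) := by
    rw [Finset.sum_mul_sum, Fintype.sum_prod_type]
    refine Finset.sum_congr rfl fun i _ => Finset.sum_congr rfl fun j _ => ?_
    simp only [map_mul]
    ring
  simp only [profile, tensorMat, Fintype.card_prod, Nat.cast_mul, mul_inv, sum_factor]
  ring

theorem trunc_tensorMat (r : ℕ) :
    trunc (tensorMat H K) r =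
      (trunc H r ⊗ₖ trunc K r).submatrix (Equiv.arrowProdEquivProdArrow (Fin r) _ _)
        (Equiv.arrowProdEquivProdArrow (Fin r) _ _) := by
  ext a b
  simp only [trunc, submatrix_apply, kroneckerMap_apply, Equiv.arrowProdEquivProdArrow,
    Equiv.coe_fn_mk, ← Finset.prod_mul_distrib]
  exact Finset.prod_congr rfl fun s _ => profile_tensorMat H K _ _ _ _

theorem trace_trunc_tensorMat_pow [DecidableEq I] [DecidableEq J] (r p : ℕ) :
    trace (trunc (tensorMat H K) r ^ p) = trace (trunc H r ^ p) * trace (trunc K r ^ p) := by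
  rw [trunc_tensorMat, submatrix_equiv_pow, trace_submatrix_equiv, kronecker_pow,
    trace_kronecker]

end Tensor

theorem trunc_tensor_moments_general (M N : ℕ)
    (r p : ℕ)
    (H : Matrix (Fin M) (Fin M) ℂ) (K : Matrix (Fin N) (Fin N) ℂ) :
    (((M * N : ℕ) : ℂ) ^ r)⁻¹ * Matrix.trace (trunc (tensorMat H K) r ^ p) =
      (((M : ℂ) ^ r)⁻¹ * Matrix.trace (trunc H r ^ p)) *
        (((N : ℂ) ^ r)⁻¹ * Matrix.trace (trunc K r ^ p)) := by
  rw [trace_trunc_tensorMat_pow, Nat.cast_mul, mul_pow, mul_inv]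
  ring

/-- for complex Hadamard matrices `H ∈ M_M(ℂ)`, `K ∈ M_N(ℂ)` and
`L = H ⊗ K`, the normalized trace moments of the order-`r` truncation matrices are
multiplicative: `(1/(MN)^r)·Tr((X^L)^p) = (1/M^r)·Tr((X^H)^p) · (1/N^r)·Tr((X^K)^p)`. -/
theorem trunc_tensor_moments (M N : ℕ) (hM : 1 ≤ M) (hN : 1 ≤ N)
    (r p : ℕ) (hr : 1 ≤ r) (hp : 1 ≤ p)
    (H : Matrix (Fin M) (Fin M) ℂ) (K : Matrix (Fin N) (Fin N) ℂ)
    (hH : _root_.IsHadamard H) (hK : _root_.IsHadamard K) :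
    (((M * N : ℕ) : ℂ) ^ r)⁻¹ * Matrix.trace (trunc (tensorMat H K) r ^ p) =
      (((M : ℂ) ^ r)⁻¹ * Matrix.trace (trunc H r ^ p)) *
        (((N : ℂ) ^ r)⁻¹ * Matrix.trace (trunc K r ^ p)) :=
  trunc_tensor_moments_general M N r p H K
end
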